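/- Let γ : ℤ → ℂ satisfy γ(0) = 1, γ(−k) = conj(γ(k)) for all k ∈ ℤ, and |γ(k)| ≤ 1 for all k ∈ ℤ. Define G(z) = Σ_{k=1}^{∞} conj(γ(k)) z^k for |z| < 1. Then for all z, w in the open unit disk 𝔻 = {z ∈ ℂ : |z| < 1}, the double series Σ_{k=0}^{∞} Σ_{l=0}^{∞} γ(l − k) z^k conj(w)^l converges absolutely and equals (1 + G(z) + conj(G(w))) / (1 − z·conj(w)). -/

import Mathlib

/-!
Split the index set `ℕ × ℕ` at the diagonal. On `k ≤ l`, writing `l = k + d`, the term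
`γ(l - k) zᵏ w̄ˡ` is `(z w̄)ᵏ · γ(d) w̄ᵈ`; on `l < k`, writing `k = l + m + 1`, it is
`(z w̄)ˡ · γ(-(m + 1)) z^(m + 1)`. Summing the geometric factor gives `1 / (1 - z w̄)` times
`1 + conj (G w)` and `G z` respectively, the latter because `γ(-(m + 1)) = conj γ(m + 1)`.
-/

def upperTriangleEquiv : ℕ × ℕ ≃ {p : ℕ × ℕ // p.1 ≤ p.2} where
  toFun q := ⟨(q.1, q.1 + q.2), Nat.le_add_right _ _⟩
  invFun p := (p.1.1, p.1.2 - p.1.1)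
  left_inv q := by simp
  right_inv := by
    rintro ⟨⟨k, l⟩, h⟩
    simp only [Subtype.mk.injEq, Prod.mk.injEq, true_and]
    omega

def strictLowerTriangleEquiv : ℕ × ℕ ≃ {p : ℕ × ℕ // ¬ p.1 ≤ p.2} where
  toFun q := ⟨(q.1 + q.2 + 1, q.1), by omega⟩
  invFun p := (p.1.2, p.1.1 - p.1.2 - 1)
  left_inv := by
    rintro ⟨l, m⟩
    simp only [Prod.mk.injEq, true_and]
    omega
  right_inv := by
    rintro ⟨⟨k, l⟩, h⟩
    simp only [Subtype.mk.injEq, Prod.mk.injEq, and_true]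
    omega

section Toeplitz

variable {𝕜 : Type*} [NormedField 𝕜]

theorem summable_norm_mul_pow_of_bounded {a : ℕ → 𝕜} {C : ℝ} (ha : ∀ n, ‖a n‖ ≤ C)
    {x : 𝕜} (hx : ‖x‖ < 1) : Summable fun n : ℕ => ‖a n * x ^ n‖ := by
  refine .of_nonneg_of_le (fun _ => norm_nonneg _) (fun n => ?_)
    ((summable_geometric_of_lt_one (norm_nonneg x) hx).mul_left C)
  rw [norm_mul, norm_pow]
  exact mul_le_mul_of_nonneg_right (ha _) (by positivity)

theorem summable_norm_toeplitz {a : ℤ → 𝕜} {C : ℝ} (ha : ∀ k, ‖a k‖ ≤ C) {z v : 𝕜}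
    (hz : ‖z‖ < 1) (hv : ‖v‖ < 1) :
    Summable fun p : ℕ × ℕ => ‖a ((p.2 : ℤ) - p.1) * z ^ p.1 * v ^ p.2‖ := by
  have hgeo : Summable fun p : ℕ × ℕ => C * (‖z‖ ^ p.1 * ‖v‖ ^ p.2) :=
    ((summable_geometric_of_lt_one (norm_nonneg z) hz).mul_of_nonneg
      (summable_geometric_of_lt_one (norm_nonneg v) hv)
      (fun _ => by positivity) (fun _ => by positivity)).mul_left C
  refine .of_nonneg_of_le (fun _ => norm_nonneg _) (fun p => ?_) hgeo
  rw [norm_mul, norm_mul, norm_pow, norm_pow, mul_assoc]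
  exact mul_le_mul_of_nonneg_right (ha _) (by positivity)

variable [CompleteSpace 𝕜]

theorem tsum_pow_mul_of_summable_norm {b : ℕ → 𝕜} (hb : Summable fun n => ‖b n‖) {q : 𝕜}
    (hq : ‖q‖ < 1) : ∑' p : ℕ × ℕ, q ^ p.1 * b p.2 = (1 - q)⁻¹ * ∑' n, b n := by
  have hgeo : Summable fun n : ℕ => ‖q ^ n‖ := by
    simpa only [norm_pow] using summable_geometric_of_lt_one (norm_nonneg q) hq
  rw [← tsum_mul_tsum_of_summable_norm hgeo hb, tsum_geometric_of_norm_lt_one hq]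

variable {a : ℤ → 𝕜} {C : ℝ} {z v : 𝕜}

theorem tsum_toeplitz_upper (ha : ∀ k, ‖a k‖ ≤ C) (hz : ‖z‖ < 1) (hv : ‖v‖ < 1) :
    ∑' p : {p : ℕ × ℕ // p.1 ≤ p.2}, a ((p.1.2 : ℤ) - p.1.1) * z ^ p.1.1 * v ^ p.1.2
      = (1 - z * v)⁻¹ * ∑' d : ℕ, a d * v ^ d := by
  have hzv : ‖z * v‖ < 1 :=
    (norm_mul_le z v).trans_lt (mul_lt_one_of_nonneg_of_lt_one_left (norm_nonneg z) hz hv.le)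
  rw [← upperTriangleEquiv.tsum_eq,
    ← tsum_pow_mul_of_summable_norm (summable_norm_mul_pow_of_bounded (fun d => ha d) hv) hzv]
  refine tsum_congr fun ⟨k, d⟩ => ?_
  simp only [upperTriangleEquiv, Equiv.coe_fn_mk, Nat.cast_add, add_sub_cancel_left,
    mul_pow, pow_add]
  ring

theorem tsum_toeplitz_strictLower (ha : ∀ k, ‖a k‖ ≤ C) (hz : ‖z‖ < 1) (hv : ‖v‖ < 1) :
    ∑' p : {p : ℕ × ℕ // ¬ p.1 ≤ p.2}, a ((p.1.2 : ℤ) - p.1.1) * z ^ p.1.1 * v ^ p.1.2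
      = (1 - z * v)⁻¹ * ∑' m : ℕ, a (-((m : ℤ) + 1)) * z ^ (m + 1) := by
  have hzv : ‖z * v‖ < 1 :=
    (norm_mul_le z v).trans_lt (mul_lt_one_of_nonneg_of_lt_one_left (norm_nonneg z) hz hv.le)
  have hb : Summable fun m : ℕ => ‖a (-((m : ℤ) + 1)) * z ^ (m + 1)‖ := by
    simpa only [norm_mul, norm_pow, pow_succ, ← mul_assoc] using
      (summable_norm_mul_pow_of_bounded (fun m => ha (-((m : ℤ) + 1))) hz).mul_right ‖z‖
  rw [← strictLowerTriangleEquiv.tsum_eq, ← tsum_pow_mul_of_summable_norm hb hzv]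
  refine tsum_congr fun ⟨l, m⟩ => ?_
  have hidx : (l : ℤ) - ((l + m + 1 : ℕ) : ℤ) = -((m : ℤ) + 1) := by push_cast; ring
  simp only [strictLowerTriangleEquiv, Equiv.coe_fn_mk, hidx, mul_pow, pow_add]
  ring

theorem tsum_toeplitz (ha : ∀ k, ‖a k‖ ≤ C) (hz : ‖z‖ < 1) (hv : ‖v‖ < 1) :
    ∑' p : ℕ × ℕ, a ((p.2 : ℤ) - p.1) * z ^ p.1 * v ^ p.2
      = (∑' d : ℕ, a d * v ^ d + ∑' m : ℕ, a (-((m : ℤ) + 1)) * z ^ (m + 1)) / (1 - z * v) := by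
  rw [← (summable_norm_toeplitz ha hz hv).of_norm.tsum_subtype_add_tsum_subtype_compl
    {p : ℕ × ℕ | p.1 ≤ p.2}, div_eq_inv_mul, mul_add]
  exact congr_arg₂ (· + ·) (tsum_toeplitz_upper ha hz hv) (tsum_toeplitz_strictLower ha hz hv)

end Toeplitz

theorem stmt_1 (γ : ℤ → ℂ) (h0 : γ 0 = 1)
    (hsym : ∀ k : ℤ, γ (-k) = (starRingEnd ℂ) (γ k))
    (hbd : ∀ k : ℤ, ‖γ k‖ ≤ 1)
    (G : ℂ → ℂ)
    (hG : ∀ z : ℂ, ‖z‖ < 1 →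
      G z = ∑' k : ℕ, (starRingEnd ℂ) (γ ((k : ℤ) + 1)) * z ^ (k + 1))
    (z w : ℂ) (hz : ‖z‖ < 1) (hw : ‖w‖ < 1) :
    Summable (fun p : ℕ × ℕ =>
      ‖γ ((p.2 : ℤ) - (p.1 : ℤ)) * z ^ p.1 * ((starRingEnd ℂ) w) ^ p.2‖) ∧
    ∑' p : ℕ × ℕ, γ ((p.2 : ℤ) - (p.1 : ℤ)) * z ^ p.1 * ((starRingEnd ℂ) w) ^ p.2
      = (1 + G z + (starRingEnd ℂ) (G w)) / (1 - z * (starRingEnd ℂ) w) := by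
  have hv : ‖(starRingEnd ℂ) w‖ < 1 := by rwa [RCLike.norm_conj]
  refine ⟨summable_norm_toeplitz hbd hz hv, ?_⟩
  have hGz : ∑' m : ℕ, γ (-((m : ℤ) + 1)) * z ^ (m + 1) = G z := by
    simp only [hsym, hG z hz]
  have hGw : ∑' d : ℕ, γ d * (starRingEnd ℂ) w ^ d = 1 + (starRingEnd ℂ) (G w) := by
    rw [(summable_norm_mul_pow_of_bounded (fun d => hbd d) hv).of_norm.tsum_eq_zero_add, hG w hw,
      Complex.conj_tsum]
    simp [h0]
  rw [tsum_toeplitz hbd hz hv, hGz, hGw]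
  ring
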